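/- arXiv:2001.00756 — 10 statements merged into one kernel-verified Lean document; each statement's English description precedes it below -/
import Mathlib

section
/- If a bipartite graph G with q edges admits an odd strongly harmonious labeling g in which every vertex of one part receives an even label and every vertex of the other part receives an odd label, then G admits an odd graceful labeling; explicitly, f(u)=g(u) on the even part and f(v)=2q−g(v) on the odd part is an odd graceful labeling. -/
open SimpleGraph

/-- The multiset-free set of induced edge labels `|f x - f y|` over edges of `G`. -/
def gracefulEdgeLabels {V : Type*} (G : SimpleGraph V) (f : V → ℕ) : Set ℕ :=
  {n | ∃ x y, G.Adj x y ∧ n = ((f x : ℤ) - (f y : ℤ)).natAbs}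

/-- The set of induced edge labels `f x + f y` over edges of `G`. -/
def harmoniousEdgeLabels {V : Type*} (G : SimpleGraph V) (f : V → ℕ) : Set ℕ :=
  {n | ∃ x y, G.Adj x y ∧ n = f x + f y}

/-- The odd numbers `{1, 3, ..., 2q-1}`. -/
def oddBelow (q : ℕ) : Set ℕ := {n | Odd n ∧ n < 2 * q}

/-- `f` is an odd graceful labeling of the graph `G` with `q` edges. -/
def IsOddGraceful {V : Type*} (G : SimpleGraph V) (q : ℕ) (f : V → ℕ) : Prop :=
  Function.Injective f ∧ (∀ v, f v < 2 * q) ∧ gracefulEdgeLabels G f = oddBelow q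

/-- `g` is an odd strongly harmonious labeling of the graph `G` with `q` edges. -/
def IsOddHarmonious {V : Type*} (G : SimpleGraph V) (q : ℕ) (g : V → ℕ) : Prop :=
  Function.Injective g ∧ (∀ v, g v < 2 * q) ∧ harmoniousEdgeLabels G g = oddBelow q

/-- Odd strongly harmonious (with even labels on one part, odd on the other) implies
odd graceful, via the explicit transformation. -/
theorem odd_harmonious_to_odd_graceful {V : Type*} [Fintype V] [DecidableEq V]
    (G : SimpleGraph V) [DecidableRel G.Adj] (q : ℕ) (hq : G.edgeFinset.card = q)
    (U : Set V) [DecidablePred (· ∈ U)]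
    (hbip : ∀ x y, G.Adj x y → (x ∈ U ↔ y ∉ U))
    (g : V → ℕ) (hg : IsOddHarmonious G q g)
    (heven : ∀ u ∈ U, Even (g u)) (hodd : ∀ v ∉ U, Odd (g v)) :
    IsOddGraceful G q (fun v => if v ∈ U then g v else 2 * q - g v) := by
  obtain ⟨ginj, gbd, gset⟩ := hg
  have key : ∀ x y, G.Adj x y →
      ((((if x ∈ U then g x else 2 * q - g x) : ℕ) : ℤ)
        - ((if y ∈ U then g y else 2 * q - g y) : ℕ)).natAbs
        = 2 * q - (g x + g y) ∧ Odd (g x + g y) ∧ g x + g y < 2 * q := by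
    intro x y hxy
    have hmem : g x + g y ∈ oddBelow q := by
      rw [← gset]; exact ⟨x, y, hxy, rfl⟩
    obtain ⟨ho, hlt⟩ := hmem
    refine ⟨?_, ho, hlt⟩
    have h1 := hbip x y hxy
    have hgx := gbd x
    have hgy := gbd y
    by_cases hx : x ∈ U
    · have hy : y ∉ U := h1.mp hx
      simp only [if_pos hx, if_neg hy]
      omega
    · have hy : y ∈ U := by by_contra hy; exact hx (h1.mpr hy)
      simp only [if_neg hx, if_pos hy]
      omega
  refine ⟨?_, ?_, ?_⟩
  · intro a b hab
    simp only at hab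
    by_cases ha : a ∈ U <;> by_cases hb : b ∈ U
    · rw [if_pos ha, if_pos hb] at hab; exact ginj hab
    · rw [if_pos ha, if_neg hb] at hab
      have h1 := heven a ha
      have h2 := hodd b hb
      have hgb := gbd b
      rw [Nat.even_iff] at h1; rw [Nat.odd_iff] at h2
      omega
    · rw [if_neg ha, if_pos hb] at hab
      have h1 := heven b hb
      have h2 := hodd a ha
      have hga := gbd a
      rw [Nat.even_iff] at h1; rw [Nat.odd_iff] at h2
      omega
    · rw [if_neg ha, if_neg hb] at hab
      have hga := gbd a
      have hgb := gbd b
      exact ginj (by omega)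
  · intro v
    by_cases hv : v ∈ U
    · simpa [hv] using gbd v
    · have h2 := hodd v hv
      have hgv := gbd v
      rw [Nat.odd_iff] at h2
      simp only [if_neg hv]
      omega
  · ext n
    constructor
    · rintro ⟨x, y, hxy, rfl⟩
      obtain ⟨hk, ho, hl⟩ := key x y hxy
      rw [hk]
      rw [Nat.odd_iff] at ho
      constructor
      · rw [Nat.odd_iff]; omega
      · omega
    · rintro ⟨hn, hlt⟩
      have hmem : 2 * q - n ∈ oddBelow q := by
        rw [Nat.odd_iff] at hn
        exact ⟨by rw [Nat.odd_iff]; omega, by omega⟩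
      rw [← gset] at hmem
      obtain ⟨x, y, hxy, hs⟩ := hmem
      refine ⟨x, y, hxy, ?_⟩
      obtain ⟨hk, ho, hl⟩ := key x y hxy
      rw [hk]
      omega
end

section
/- If f is a bipartite odd graceful labeling of a graph G with bipartition (U,V), and u* ∈ U has the maximum label among U while v* ∈ V has the minimum label among V, then f(v*) − f(u*) = 1 and u*v* is an edge of G. -/
open SimpleGraph

/-- In a bipartite odd graceful labeling, the largest label of U and the smallest label of V
differ by 1 and the corresponding vertices are adjacent. -/
theorem bipartite_odd_graceful_middle_edge {V : Type*} [Fintype V] [DecidableEq V]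
    (G : SimpleGraph V) [DecidableRel G.Adj] (q : ℕ) (hq : G.edgeFinset.card = q)
    (hq1 : 1 ≤ q) (U : Set V)
    (hbip : ∀ x y, G.Adj x y → (x ∈ U ↔ y ∉ U))
    (f : V → ℕ) (hf : IsOddGraceful G q f)
    (hlt : ∀ u ∈ U, ∀ v ∉ U, f u < f v)
    (u v : V) (hu : u ∈ U) (hv : v ∉ U)
    (humax : ∀ w ∈ U, f w ≤ f u) (hvmin : ∀ w ∉ U, f v ≤ f w) :
    f v = f u + 1 ∧ G.Adj u v := by
  obtain ⟨hinj, _, hlab⟩ := hf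
  have h1 : (1 : ℕ) ∈ gracefulEdgeLabels G f := by
    rw [hlab]; exact ⟨odd_one, by omega⟩
  obtain ⟨x, y, hxy, hab⟩ := h1
  -- WLOG x ∈ U
  have key : ∀ x y : V, G.Adj x y → x ∈ U →
      (1 : ℕ) = ((f x : ℤ) - (f y : ℤ)).natAbs → f v = f u + 1 ∧ G.Adj u v := by
    intro x y hxy hxU hab
    have hyU : y ∉ U := (hbip x y hxy).mp hxU
    have hxy' : f x < f y := hlt x hxU y hyU
    have hfy : f y = f x + 1 := by omega
    have hxu : f x ≤ f u := humax x hxU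
    have hvy : f v ≤ f y := hvmin y hyU
    have huv : f u < f v := hlt u hu v hv
    have hfu : f u = f x := by omega
    have hfv : f v = f y := by omega
    have : u = x := hinj hfu
    have : v = y := hinj hfv
    subst ‹u = x›; subst ‹v = y›
    exact ⟨by omega, hxy⟩
  by_cases hxU : x ∈ U
  · exact key x y hxy hxU hab
  · have hyU : y ∈ U := by
      by_contra h
      exact hxU ((hbip x y hxy).mpr h)
    exact key y x hxy.symm hyU (by omega)
end

section
/- If g is an odd strongly harmonious labeling of a graph G with q ≥ 1 edges and the maximum vertex label equals q (attained at vertex u), then there is a vertex v adjacent to u with g(v) = q−1. -/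
open SimpleGraph

/-- If the maximum label in an odd strongly harmonious labeling equals q, attained at u, then
u is adjacent to a vertex labeled q-1. -/
theorem odd_harmonious_max_label_eq {V : Type*} [Fintype V] [DecidableEq V]
    (G : SimpleGraph V) [DecidableRel G.Adj] (q : ℕ) (hq : G.edgeFinset.card = q)
    (hq1 : 1 ≤ q) (g : V → ℕ) (hg : IsOddHarmonious G q g)
    (u : V) (hu : g u = q) (hmax : ∀ v, g v ≤ q) :
    ∃ v, G.Adj u v ∧ g v = q - 1 := by
  obtain ⟨ginj, _, hlab⟩ := hg
  have hmem : (2 * q - 1) ∈ harmoniousEdgeLabels G g := by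
    rw [hlab]
    constructor
    · refine ⟨q - 1, ?_⟩; omega
    · omega
  obtain ⟨x, y, hadj, hsum⟩ := hmem
  have hx := hmax x
  have hy := hmax y
  rcases (by omega : g x = q ∨ g y = q) with h | h
  · have : x = u := ginj (by rw [h, hu])
    subst this
    exact ⟨y, hadj, by omega⟩
  · have : y = u := ginj (by rw [h, hu])
    subst this
    exact ⟨x, hadj.symm, by omega⟩
end

section
/- If G is connected and g is an odd strongly harmonious labeling of G, then the vertices with even labels and the vertices with odd labels form a bipartition of G, and in any bipartition (U,V) with 0 labeled in U, every vertex of U has even label and every vertex of V has odd label. -/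
open SimpleGraph

/-- For a connected odd strongly harmonious graph, even/odd labels form a bipartition, and in
any bipartition with the 0-labeled vertex in U, labels on U are even and labels on V are odd. -/
theorem odd_harmonious_parity_bipartition {V : Type*} [Fintype V] [DecidableEq V]
    (G : SimpleGraph V) [DecidableRel G.Adj] (hconn : G.Connected)
    (q : ℕ) (hq : G.edgeFinset.card = q)
    (g : V → ℕ) (hg : IsOddHarmonious G q g) :
    (∀ x y, G.Adj x y → (Even (g x) ↔ ¬ Even (g y))) ∧
    (∀ U : Set V, (∀ x y, G.Adj x y → (x ∈ U ↔ y ∉ U)) →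
      (∀ u, g u = 0 → u ∈ U) →
      (∀ u ∈ U, Even (g u)) ∧ (∀ v ∉ U, Odd (g v))) := by
  obtain ⟨hinj, hlt, hlab⟩ := hg
  have hpar : ∀ x y, G.Adj x y → (Even (g x) ↔ ¬ Even (g y)) := by
    intro x y hxy
    have hmem : g x + g y ∈ harmoniousEdgeLabels G g := ⟨x, y, hxy, rfl⟩
    rw [hlab] at hmem
    have := Nat.odd_iff.mp hmem.1
    simp only [Nat.even_iff]
    omega
  refine ⟨hpar, ?_⟩
  intro U hU hU0
  -- q ≥ 1
  obtain ⟨v0⟩ := hconn.nonempty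
  have hq1 : 1 ≤ q := by have := hlt v0; omega
  -- there is a vertex labeled 0
  obtain ⟨u, hu0⟩ : ∃ u, g u = 0 := by
    have h1 : (1 : ℕ) ∈ oddBelow q := ⟨odd_one, by omega⟩
    rw [← hlab] at h1
    obtain ⟨x, y, hxy, hsum⟩ := h1
    rcases Nat.eq_zero_or_pos (g x) with h | h
    · exact ⟨x, h⟩
    · exact ⟨y, by omega⟩
  have huU : u ∈ U := hU0 u hu0
  have step : ∀ a b : V, G.Walk a b → (a ∈ U ↔ Even (g a)) → (b ∈ U ↔ Even (g b)) := by
    intro a b p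
    induction p with
    | nil => exact id
    | cons h p ih =>
      intro ha
      apply ih
      have h1 := hU _ _ h
      have h2 := hpar _ _ h
      tauto
  have key : ∀ w, (w ∈ U ↔ Even (g w)) := by
    intro w
    exact step u w (Classical.choice (hconn u w)) (by simp [huU, hu0])
  exact ⟨fun a ha => (key a).mp ha,
    fun b hb => Nat.not_even_iff_odd.mp (fun h => hb ((key b).mpr h))⟩
end

section
/- For all m, n ≥ 1, the complete bipartite graph K_{m,n} admits a bipartite odd graceful labeling; explicitly, labeling the vertices of one part u_1,...,u_m by f(u_i) = 2(i−1) and the other part v_1,...,v_n by f(v_j) = 2mj − 1 is such a labeling. -/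
open SimpleGraph

lemma cbog_label_eq (m i j : ℕ) (hi : i < m) :
    (((2*m*(j+1)-1 : ℕ) : ℤ) - ((2*i : ℕ) : ℤ)).natAbs = 2*(m*(j+1)) - 1 - 2*i := by
  have h1 : m ≤ m*(j+1) := Nat.le_mul_of_pos_right m (by omega)
  have h2 : 2*m*(j+1) = 2*(m*(j+1)) := by ring
  rw [h2]
  omega

/-- The explicit labeling f(uᵢ)=2(i-1), f(vⱼ)=2mj-1 is a bipartite odd graceful labeling of
the complete bipartite graph K_{m,n}. -/
theorem completeBipartite_bipartite_odd_graceful (m n : ℕ) (hm : 1 ≤ m) (hn : 1 ≤ n) :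
    IsOddGraceful (completeBipartiteGraph (Fin m) (Fin n)) (m * n)
      (Sum.elim (fun i => 2 * (i : ℕ)) (fun j => 2 * m * ((j : ℕ) + 1) - 1)) ∧
    ∀ (i : Fin m) (j : Fin n),
      (Sum.elim (fun i => 2 * (i : ℕ)) (fun j => 2 * m * ((j : ℕ) + 1) - 1) : Fin m ⊕ Fin n → ℕ)
          (Sum.inl i) <
      (Sum.elim (fun i => 2 * (i : ℕ)) (fun j => 2 * m * ((j : ℕ) + 1) - 1)) (Sum.inr j) := by
  have hmn : 1 ≤ m * n := Nat.mul_pos hm hn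
  have hkey : ∀ (j : Fin n), 2*m*((j:ℕ)+1) = 2*(m*((j:ℕ)+1)) := fun j => by ring
  have hge : ∀ (j : Fin n), m ≤ m*((j:ℕ)+1) := fun j =>
    Nat.le_mul_of_pos_right m (by omega)
  have hle : ∀ (j : Fin n), m*((j:ℕ)+1) ≤ m*n := fun j =>
    Nat.mul_le_mul_left m (by omega)
  constructor
  · refine ⟨?_, ?_, ?_⟩
    · intro a b hab
      match a, b with
      | Sum.inl i, Sum.inl i' =>
        simp only [Sum.elim_inl] at hab
        exact congrArg Sum.inl (Fin.ext (by omega))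
      | Sum.inl i, Sum.inr j =>
        exfalso
        simp only [Sum.elim_inl, Sum.elim_inr, hkey j] at hab
        have := hge j; omega
      | Sum.inr j, Sum.inl i =>
        exfalso
        simp only [Sum.elim_inl, Sum.elim_inr, hkey j] at hab
        have := hge j; omega
      | Sum.inr j, Sum.inr j' =>
        simp only [Sum.elim_inr, hkey j, hkey j'] at hab
        have h1 := hge j; have h2 := hge j'
        have h3 : m*((j:ℕ)+1) = m*((j':ℕ)+1) := by omega
        have h4 := Nat.eq_of_mul_eq_mul_left hm h3
        exact congrArg Sum.inr (Fin.ext (by omega))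
    · intro v
      match v with
      | Sum.inl i =>
        simp only [Sum.elim_inl]
        have : (i:ℕ) < m := i.isLt
        have : m ≤ m*n := Nat.le_mul_of_pos_right m hn
        omega
      | Sum.inr j =>
        simp only [Sum.elim_inr, hkey j]
        have := hle j; have := hge j; omega
    · ext k
      simp only [gracefulEdgeLabels, oddBelow, Set.mem_setOf_eq, Nat.odd_iff]
      constructor
      · rintro ⟨x, y, hadj, rfl⟩
        match x, y with
        | Sum.inl i, Sum.inr j =>
          simp only [Sum.elim_inl, Sum.elim_inr]
          have hsymm : ∀ a b : ℤ, (a - b).natAbs = (b - a).natAbs := fun a b => by omega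
          rw [hsymm, cbog_label_eq m i (j:ℕ) i.isLt]
          have h1 := hge j; have h2 := hle j; have h3 : (i:ℕ) < m := i.isLt
          omega
        | Sum.inr j, Sum.inl i =>
          simp only [Sum.elim_inl, Sum.elim_inr]
          rw [cbog_label_eq m i (j:ℕ) i.isLt]
          have h1 := hge j; have h2 := hle j; have h3 : (i:ℕ) < m := i.isLt
          omega
        | Sum.inl i, Sum.inl i' => simp [completeBipartiteGraph] at hadj
        | Sum.inr j, Sum.inr j' => simp [completeBipartiteGraph] at hadj
      · rintro ⟨hodd, hlt⟩
        set t := k / 2 with ht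
        have htlt : t < m * n := by omega
        have hq : t / m < n := (Nat.div_lt_iff_lt_mul hm).2 (by
          calc t < m * n := htlt
          _ = n * m := Nat.mul_comm m n)
        have hr : t % m < m := Nat.mod_lt _ hm
        refine ⟨Sum.inr ⟨t / m, hq⟩, Sum.inl ⟨m - 1 - t % m, by omega⟩, by
          simp [completeBipartiteGraph], ?_⟩
        simp only [Sum.elim_inl, Sum.elim_inr]
        rw [cbog_label_eq m _ _ (by omega)]
        have hdm := Nat.div_add_mod t m
        have hmul : m * (t / m + 1) = m * (t / m) + m := by ring
        omega
  · intro i j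
    simp only [Sum.elim_inl, Sum.elim_inr, hkey j]
    have := hge j
    have : (i:ℕ) < m := i.isLt
    omega
end

section
/- For all m, n ≥ 1, the complete bipartite graph K_{m,n} admits an odd strongly harmonious labeling. -/
open SimpleGraph

/-- The complete bipartite graph K_{m,n} admits an odd strongly harmonious labeling. -/
theorem completeBipartite_odd_harmonious (m n : ℕ) (hm : 1 ≤ m) (hn : 1 ≤ n) :
    ∃ g : Fin m ⊕ Fin n → ℕ,
      IsOddHarmonious (completeBipartiteGraph (Fin m) (Fin n)) (m * n) g := by
  refine ⟨Sum.elim (fun i => 2 * i.1) (fun j => 2 * m * j.1 + 1), ?_, ?_, ?_⟩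
  · rintro (a | a) (b | b) h <;> simp only [Sum.elim_inl, Sum.elim_inr] at h
    · exact congrArg Sum.inl (Fin.ext (by omega))
    · rw [mul_assoc] at h; omega
    · rw [mul_assoc] at h; omega
    · have := a.2; have := b.2
      have : a.1 = b.1 := by
        rcases Nat.lt_or_ge a.1 b.1 with hlt | hge
        · nlinarith
        · rcases Nat.lt_or_ge b.1 a.1 with hlt2 | hge2
          · nlinarith
          · omega
      exact congrArg Sum.inr (Fin.ext this)
  · rintro (a | a)
    · have := a.2; simp only [Sum.elim_inl]; nlinarith
    · have := a.2; simp only [Sum.elim_inr]; nlinarith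
  · ext k
    simp only [harmoniousEdgeLabels, oddBelow, Set.mem_setOf_eq]
    constructor
    · rintro ⟨x, y, hadj, rfl⟩
      rcases x with i | j <;> rcases y with i' | j' <;>
        simp only [completeBipartiteGraph_adj, Sum.isLeft_inl, Sum.isRight_inl,
          Sum.isLeft_inr, Sum.isRight_inr] at hadj
      · simp at hadj
      · have h1 := i.2; have h2 := j'.2
        simp only [Sum.elim_inl, Sum.elim_inr]
        constructor
        · exact ⟨i.1 + m * j'.1, by ring⟩
        · nlinarith
      · have h1 := i'.2; have h2 := j.2
        simp only [Sum.elim_inl, Sum.elim_inr]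
        constructor
        · exact ⟨i'.1 + m * j.1, by ring⟩
        · nlinarith
      · simp at hadj
    · rintro ⟨⟨t, rfl⟩, hlt⟩
      have ht : t < m * n := by omega
      have hi : t % m < m := Nat.mod_lt _ hm
      have hj : t / m < n := Nat.div_lt_of_lt_mul ht
      refine ⟨Sum.inl ⟨t % m, hi⟩, Sum.inr ⟨t / m, hj⟩, by simp, ?_⟩
      simp only [Sum.elim_inl, Sum.elim_inr]
      have := Nat.div_add_mod t m
      rw [mul_assoc]
      omega
end

section
/- For any t ≥ 1 and positive integers m_i, n_i (i = 1,...,t), the disjoint union of the complete bipartite graphs K_{m_i,n_i} admits a bipartite odd graceful labeling. -/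
open SimpleGraph

/-- The disjoint union of the complete bipartite graphs K_{m i, n i}, i < t. -/
def KPlus (t : ℕ) (m n : ℕ → ℕ) :
    SimpleGraph (Σ i : Fin t, Fin (m i.val) ⊕ Fin (n i.val)) :=
  SimpleGraph.fromRel (fun a b =>
    ∃ h : a.1 = b.1, a.2.isLeft ∧ b.2.isRight)

namespace KPlusProof

def sig (m : ℕ → ℕ) (i : ℕ) : ℕ := ∑ k ∈ Finset.range i, (2 * m k - 1)

def rr (t : ℕ) (m n : ℕ → ℕ) (i : ℕ) : ℕ := ∑ k ∈ Finset.Ico i t, m k * n k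

lemma sig_zero (m : ℕ → ℕ) : sig m 0 = 0 := by simp [sig]

lemma sig_succ (m : ℕ → ℕ) {i : ℕ} (h : 1 ≤ m i) : sig m (i+1) + 1 = sig m i + 2 * m i := by
  simp only [sig, Finset.sum_range_succ]; omega

lemma sig_mono (m : ℕ → ℕ) : Monotone (sig m) := fun _ _ h =>
  Finset.sum_le_sum_of_subset (Finset.range_subset_range.2 h)

lemma rr_succ (t : ℕ) (m n : ℕ → ℕ) {i : ℕ} (h : i < t) :
    rr t m n i = m i * n i + rr t m n (i+1) :=
  Finset.sum_eq_sum_Ico_succ_bot h _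

lemma rr_t (t : ℕ) (m n : ℕ → ℕ) : rr t m n t = 0 := by simp [rr]

lemma T_anti (t : ℕ) (m n : ℕ → ℕ) (hm : ∀ k < t, 1 ≤ m k) (hn : ∀ k < t, 1 ≤ n k)
    {i j : ℕ} (hij : i ≤ j) (hjt : j ≤ t) :
    sig m j + 2 * rr t m n j ≤ sig m i + 2 * rr t m n i := by
  induction j, hij using Nat.le_induction with
  | base => exact le_rfl
  | succ j hij ih =>
    have hjt' : j < t := by omega
    have h1 := sig_succ m (hm j hjt')
    have h2 := rr_succ t m n hjt'
    have h3 : m j ≤ m j * n j := Nat.le_mul_of_pos_right _ (hn j hjt')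
    have ih' := ih (by omega)
    omega

def fl (t : ℕ) (m n : ℕ → ℕ) (a : Σ i : Fin t, Fin (m i.val) ⊕ Fin (n i.val)) : ℕ :=
  Sum.elim (fun j => sig m a.1.val + 2 * j.val)
    (fun k => sig m (a.1.val+1) + 2 * rr t m n (a.1.val+1) + 2 * (m a.1.val * k.val)) a.2

lemma exists_cross (t : ℕ) (m n : ℕ → ℕ) (e : ℕ) (h : e < rr t m n 0) :
    ∃ i, i < t ∧ rr t m n (i+1) ≤ e ∧ e < rr t m n i := by
  classical
  have hspec : e < rr t m n (Nat.findGreatest (fun x => e < rr t m n x) t) :=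
    Nat.findGreatest_spec (P := fun x => e < rr t m n x) (Nat.zero_le t) h
  have hle : Nat.findGreatest (fun x => e < rr t m n x) t ≤ t :=
    Nat.findGreatest_le t
  have hit : Nat.findGreatest (fun x => e < rr t m n x) t < t := by
    rcases lt_or_eq_of_le hle with h'|h'
    · exact h'
    · exfalso
      have := hspec
      rw [h', rr_t] at this
      omega
  have hgr : ¬ (e < rr t m n (Nat.findGreatest (fun x => e < rr t m n x) t + 1)) :=
    Nat.findGreatest_is_greatest (P := fun x => e < rr t m n x) (Nat.lt_succ_self _) (by omega)
  exact ⟨_, hit, by omega, hspec⟩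

lemma adj_rl (t : ℕ) (m n : ℕ → ℕ) (i : Fin t) (j : Fin (m i.val)) (k : Fin (n i.val)) :
    (KPlus t m n).Adj ⟨i, Sum.inr k⟩ ⟨i, Sum.inl j⟩ := by
  rw [KPlus, fromRel_adj]
  exact ⟨by simp, Or.inr ⟨rfl, rfl, rfl⟩⟩

lemma adj_cases {t : ℕ} {m n : ℕ → ℕ} {a b : Σ i : Fin t, Fin (m i.val) ⊕ Fin (n i.val)}
    (h : (KPlus t m n).Adj a b) :
    a.1 = b.1 ∧ ((a.2.isLeft = true ∧ b.2.isRight = true) ∨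
      (b.2.isLeft = true ∧ a.2.isRight = true)) := by
  rw [KPlus, fromRel_adj] at h
  obtain ⟨-, h | h⟩ := h
  · obtain ⟨h1, h2, h3⟩ := h; exact ⟨h1, Or.inl ⟨h2, h3⟩⟩
  · obtain ⟨h1, h2, h3⟩ := h; exact ⟨h1.symm, Or.inr ⟨h2, h3⟩⟩

end KPlusProof

open KPlusProof

/-- The disjoint union of complete bipartite graphs admits a bipartite odd graceful
labeling. -/
theorem kPlus_bipartite_odd_graceful (t : ℕ) (ht : 1 ≤ t) (m n : ℕ → ℕ)
    (hm : ∀ i < t, 1 ≤ m i) (hn : ∀ i < t, 1 ≤ n i) :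
    ∃ (f : (Σ i : Fin t, Fin (m i.val) ⊕ Fin (n i.val)) → ℕ)
      (U : Set (Σ i : Fin t, Fin (m i.val) ⊕ Fin (n i.val))),
      IsOddGraceful (KPlus t m n) (∑ k ∈ Finset.range t, m k * n k) f ∧
      (∀ x y, (KPlus t m n).Adj x y → (x ∈ U ↔ y ∉ U)) ∧
      (∀ u ∈ U, ∀ v ∉ U, f u < f v) := by
  classical
  have hq : (∑ k ∈ Finset.range t, m k * n k) = rr t m n 0 := by
    rw [Finset.range_eq_Ico]; rfl
  set q := ∑ k ∈ Finset.range t, m k * n k with hqdef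
  -- helper facts
  have hLub : ∀ i : ℕ, i < t → ∀ j : ℕ, j < m i → sig m i + 2*j + 1 ≤ sig m (i+1) := by
    intro i hi j hj
    have := sig_succ m (hm i hi); omega
  have hRlb : ∀ i : ℕ, i < t → sig m t ≤ sig m (i+1) + 2 * rr t m n (i+1) := by
    intro i hi
    have h1 := T_anti t m n hm hn (show i+1 ≤ t by omega) le_rfl
    have h0 := rr_t t m n; omega
  have hRub : ∀ i : ℕ, i < t → ∀ k : ℕ, k < n i →
      sig m (i+1) + 2 * rr t m n (i+1) + 2 * (m i * k) + 1 ≤ sig m i + 2 * rr t m n i := by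
    intro i hi k hk
    have h1 := sig_succ m (hm i hi)
    have h2 := rr_succ t m n hi
    have h3 : m i * (k+1) ≤ m i * n i := Nat.mul_le_mul_left _ hk
    have h4 : m i * (k+1) = m i * k + m i := Nat.mul_succ _ _
    omega
  have hT0 : ∀ i : ℕ, i ≤ t → sig m i + 2 * rr t m n i ≤ 2 * q := by
    intro i hi
    have h1 := T_anti t m n hm hn (Nat.zero_le i) hi
    have h0 := sig_zero m; omega
  have hbip : ∀ (i : Fin t) (j : Fin (m i.val)) (i' : Fin t) (k : Fin (n i'.val)),
      fl t m n ⟨i, Sum.inl j⟩ < fl t m n ⟨i', Sum.inr k⟩ := by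
    intro i j i' k
    simp only [fl, Sum.elim_inl, Sum.elim_inr]
    have h1 := hLub i.val i.isLt j.val j.isLt
    have h2 : sig m (i.val+1) ≤ sig m t := sig_mono m i.isLt
    have h3 := hRlb i'.val i'.isLt
    omega
  refine ⟨fl t m n, {a | a.2.isLeft}, ⟨?_, ?_, ?_⟩, ?_, ?_⟩
  · -- injectivity
    intro a b hab
    obtain ⟨i, p⟩ := a; obtain ⟨i', p'⟩ := b
    cases p with
    | inl j => cases p' with
      | inl j' =>
        simp only [fl, Sum.elim_inl, Sum.elim_inr] at hab
        have hii : i.val = i'.val := by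
          rcases Nat.lt_trichotomy i.val i'.val with h|h|h
          · exfalso
            have h1 := hLub i.val i.isLt j.val j.isLt
            have h2 : sig m (i.val+1) ≤ sig m i'.val := sig_mono m h
            omega
          · exact h
          · exfalso
            have h1 := hLub i'.val i'.isLt j'.val j'.isLt
            have h2 : sig m (i'.val+1) ≤ sig m i.val := sig_mono m h
            omega
        have hii' : i = i' := Fin.ext hii
        subst hii'
        have : j = j' := Fin.ext (by omega)
        rw [this]
      | inr k => exact absurd hab (Nat.ne_of_lt (hbip i j i' k))
    | inr k => cases p' with
      | inl j' => exact absurd hab.symm (Nat.ne_of_lt (hbip i' j' i k))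
      | inr k' =>
        simp only [fl, Sum.elim_inl, Sum.elim_inr] at hab
        have hii : i.val = i'.val := by
          rcases Nat.lt_trichotomy i.val i'.val with h|h|h
          · exfalso
            have h1 := hRub i'.val i'.isLt k'.val k'.isLt
            have h2 := T_anti t m n hm hn (show i.val+1 ≤ i'.val from h) i'.isLt.le
            omega
          · exact h
          · exfalso
            have h1 := hRub i.val i.isLt k.val k.isLt
            have h2 := T_anti t m n hm hn (show i'.val+1 ≤ i.val from h) i.isLt.le
            omega
        have hii' : i = i' := Fin.ext hii
        subst hii'
        have hmpos : 0 < m i.val := hm i.val i.isLt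
        have hkk : k.val = k'.val :=
          Nat.eq_of_mul_eq_mul_left hmpos (by omega)
        have : k = k' := Fin.ext hkk
        rw [this]
  · -- bound
    intro v
    obtain ⟨i, p⟩ := v
    cases p with
    | inl j =>
      simp only [fl, Sum.elim_inl, Sum.elim_inr]
      have h1 := hLub i.val i.isLt j.val j.isLt
      have h2 : sig m (i.val+1) ≤ sig m t := sig_mono m i.isLt
      have h3 := hT0 t le_rfl
      have h0 := rr_t t m n
      omega
    | inr k =>
      simp only [fl, Sum.elim_inl, Sum.elim_inr]
      have h1 := hRub i.val i.isLt k.val k.isLt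
      have h2 := hT0 i.val i.isLt.le
      omega
  · -- edge labels
    ext d
    simp only [gracefulEdgeLabels, oddBelow, Set.mem_setOf_eq]
    constructor
    · rintro ⟨x, y, hadj, rfl⟩
      obtain ⟨hfst, hc⟩ := adj_cases hadj
      obtain ⟨i, p⟩ := x; obtain ⟨i', p'⟩ := y
      have hii : i = i' := hfst
      subst hii
      have h1 := sig_succ m (hm i.val i.isLt)
      have h2 := rr_succ t m n i.isLt
      have h3 := hT0 i.val i.isLt.le
      rw [Nat.odd_iff]
      cases p with
      | inl j => cases p' with
        | inl j' => simp at hc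
        | inr k =>
          simp only [fl, Sum.elim_inl, Sum.elim_inr]
          have h4 := hRub i.val i.isLt k.val k.isLt
          have h5 := j.isLt
          constructor <;> omega
      | inr k => cases p' with
        | inl j' =>
          simp only [fl, Sum.elim_inl, Sum.elim_inr]
          have h4 := hRub i.val i.isLt k.val k.isLt
          have h5 := j'.isLt
          constructor <;> omega
        | inr k' => simp at hc
    · rintro ⟨hodd, hlt⟩
      rw [Nat.odd_iff] at hodd
      set e := d / 2 with he
      have hd : d = 2*e + 1 := by omega
      have he0 : e < rr t m n 0 := by omega
      obtain ⟨i, hit, hPi1, hPi⟩ := exists_cross t m n e he0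
      set c := e - rr t m n (i+1) with hcdef
      have hmpos : 0 < m i := hm i hit
      have h2 := rr_succ t m n hit
      have hclt : c < m i * n i := by omega
      have hk : c / m i < n i := by
        rw [Nat.div_lt_iff_lt_mul hmpos, Nat.mul_comm]; exact hclt
      have hj : m i - 1 - c % m i < m i := by omega
      refine ⟨⟨⟨i, hit⟩, Sum.inr ⟨c / m i, hk⟩⟩, ⟨⟨i, hit⟩, Sum.inl ⟨m i - 1 - c % m i, hj⟩⟩,
        adj_rl t m n _ _ _, ?_⟩
      simp only [fl, Sum.elim_inl, Sum.elim_inr, Fin.val_mk]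
      have hdm := Nat.div_add_mod c (m i)
      have hmod : c % m i < m i := Nat.mod_lt _ hmpos
      have h1 := sig_succ m (hm i hit)
      omega
  · -- bipartition condition
    intro x y hadj
    obtain ⟨hfst, hc⟩ := adj_cases hadj
    obtain ⟨i, p⟩ := x; obtain ⟨i', p'⟩ := y
    cases p <;> cases p' <;> simp_all [Set.mem_setOf_eq]
  · -- order condition
    intro u hu v hv
    obtain ⟨i, p⟩ := u; obtain ⟨i', p'⟩ := v
    cases p with
    | inl j =>
      cases p' with
      | inl j' => exact absurd (by simp [Set.mem_setOf_eq]) hv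
      | inr k => exact hbip i j i' k
    | inr k => exact absurd hu (by simp [Set.mem_setOf_eq])
end

section
/- For every n ≥ 1, the ladder-like graph G_n with vertices u_{i,j} (1 ≤ i ≤ n, 1 ≤ j ≤ 4) and edges u_{i,1}u_{i+1,1}, u_{i,3}u_{i+1,3} (1 ≤ i ≤ n−1) together with the 4-cycles u_{i,1}u_{i,2}, u_{i,2}u_{i,3}, u_{i,3}u_{i,4}, u_{i,4}u_{i,1} (1 ≤ i ≤ n) admits an odd strongly harmonious labeling; an explicit labeling depending on the parity of i is given by g(u_{i,1}) = 6i−5 or 6i−2, g(u_{i,2}) = 6(i−1) or 6i−5, g(u_{i,3}) = 6i−3 or 6(i−1), g(u_{i,4}) = 6(i−1)+4 or 6i−3, for i odd or even respectively. -/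
open SimpleGraph

/-- The ladder-like graph Gₙ: two paths on columns 0 and 2 together with a 4-cycle
u_{i,0} u_{i,1} u_{i,2} u_{i,3} at each level i (0-based indexing). -/
def LadderG (n : ℕ) : SimpleGraph (Fin n × Fin 4) :=
  SimpleGraph.fromRel (fun a b =>
    (a.2 = b.2 ∧ ((a.2 : ℕ) = 0 ∨ (a.2 : ℕ) = 2) ∧ (b.1 : ℕ) = (a.1 : ℕ) + 1) ∨
    (a.1 = b.1 ∧ ((b.2 : ℕ) = (a.2 : ℕ) + 1 ∨ ((a.2 : ℕ) = 3 ∧ (b.2 : ℕ) = 0))))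

/-- The explicit labeling of Gₙ (paper's 1-based index i corresponds to i+1 here). -/
def ladderLabel (n : ℕ) : Fin n × Fin 4 → ℕ :=
  fun x =>
    6 * (x.1 : ℕ) +
      (if Even (x.1 : ℕ) then
        (if (x.2 : ℕ) = 0 then 1 else if (x.2 : ℕ) = 1 then 0
          else if (x.2 : ℕ) = 2 then 3 else 4)
      else
        (if (x.2 : ℕ) = 0 then 4 else if (x.2 : ℕ) = 1 then 1
          else if (x.2 : ℕ) = 2 then 0 else 3))

lemma adj_cycle {n : ℕ} (i : Fin n) (j j' : Fin 4)
    (h : (j' : ℕ) = (j : ℕ) + 1 ∨ ((j : ℕ) = 3 ∧ (j' : ℕ) = 0)) :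
    (LadderG n).Adj (i, j) (i, j') := by
  rw [LadderG, SimpleGraph.fromRel_adj]
  refine ⟨?_, Or.inl (Or.inr ⟨rfl, h⟩)⟩
  simp only [ne_eq, Prod.mk.injEq, Fin.ext_iff, not_and]
  omega

lemma adj_path {n : ℕ} (i i' : Fin n) (j : Fin 4)
    (hj : (j : ℕ) = 0 ∨ (j : ℕ) = 2) (h : (i' : ℕ) = (i : ℕ) + 1) :
    (LadderG n).Adj (i, j) (i', j) := by
  rw [LadderG, SimpleGraph.fromRel_adj]
  refine ⟨?_, Or.inl (Or.inl ⟨rfl, hj, h⟩)⟩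
  simp only [ne_eq, Prod.mk.injEq, Fin.ext_iff, not_and]
  omega

set_option maxHeartbeats 2000000 in
/-- The ladder-like graph Gₙ is odd strongly harmonious via the explicit labeling. -/
theorem ladder_odd_harmonious (n : ℕ) (hn : 1 ≤ n) :
    IsOddHarmonious (LadderG n) (6 * n - 2) (ladderLabel n) := by
  refine ⟨?_, ?_, ?_⟩
  · -- injectivity
    rintro ⟨i, j⟩ ⟨i', j'⟩ h
    simp only [ladderLabel, Nat.even_iff] at h
    have hj := j.isLt; have hj' := j'.isLt
    have : (i : ℕ) = (i' : ℕ) ∧ (j : ℕ) = (j' : ℕ) := by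
      split_ifs at h <;> omega
    simp only [Prod.mk.injEq, Fin.ext_iff]
    exact this
  · -- bound
    rintro ⟨i, j⟩
    simp only [ladderLabel, Nat.even_iff]
    have hi := i.isLt
    split_ifs <;> first | omega | exact (‹False›).elim
  · ext m
    simp only [harmoniousEdgeLabels, oddBelow, Set.mem_setOf_eq]
    constructor
    · rintro ⟨⟨i, j⟩, ⟨i', j'⟩, hadj, rfl⟩
      rw [LadderG, SimpleGraph.fromRel_adj] at hadj
      simp only [ne_eq, Prod.mk.injEq, Fin.ext_iff, not_and] at hadj
      have hi := i.isLt; have hi' := i'.isLt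
      have hj := j.isLt; have hj' := j'.isLt
      simp only [ladderLabel, Nat.even_iff]
      rw [Nat.odd_iff]
      constructor
      · split_ifs <;> first | omega | exact (‹False›).elim
      · split_ifs <;> first | omega | exact (‹False›).elim
    · rintro ⟨hodd, hlt⟩
      rw [Nat.odd_iff] at hodd
      have h12 : m % 12 = 1 ∨ m % 12 = 3 ∨ m % 12 = 5 ∨ m % 12 = 7 ∨
          m % 12 = 9 ∨ m % 12 = 11 := by omega
      by_cases hp : (m / 12) % 2 = 0
      · rcases h12 with h | h | h | h | h | h
        · have hi : m / 12 < n := by omega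
          exact ⟨(⟨m / 12, hi⟩, ⟨0, by omega⟩), (⟨m / 12, hi⟩, ⟨1, by omega⟩),
            adj_cycle _ _ _ (Or.inl rfl),
            by simp only [ladderLabel, Nat.even_iff, Fin.val_mk]; split_ifs <;> first | omega | exact (‹False›).elim⟩
        · have hi : m / 12 < n := by omega
          exact ⟨(⟨m / 12, hi⟩, ⟨1, by omega⟩), (⟨m / 12, hi⟩, ⟨2, by omega⟩),
            adj_cycle _ _ _ (Or.inl rfl),
            by simp only [ladderLabel, Nat.even_iff, Fin.val_mk]; split_ifs <;> first | omega | exact (‹False›).elim⟩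
        · have hi : m / 12 < n := by omega
          exact ⟨(⟨m / 12, hi⟩, ⟨3, by omega⟩), (⟨m / 12, hi⟩, ⟨0, by omega⟩),
            adj_cycle _ _ _ (Or.inr ⟨rfl, rfl⟩),
            by simp only [ladderLabel, Nat.even_iff, Fin.val_mk]; split_ifs <;> first | omega | exact (‹False›).elim⟩
        · have hi : m / 12 < n := by omega
          exact ⟨(⟨m / 12, hi⟩, ⟨2, by omega⟩), (⟨m / 12, hi⟩, ⟨3, by omega⟩),
            adj_cycle _ _ _ (Or.inl rfl),
            by simp only [ladderLabel, Nat.even_iff, Fin.val_mk]; split_ifs <;> first | omega | exact (‹False›).elim⟩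
        · have hi1 : m / 12 + 1 < n := by omega
          have hi : m / 12 < n := by omega
          exact ⟨(⟨m / 12, hi⟩, ⟨2, by omega⟩), (⟨m / 12 + 1, hi1⟩, ⟨2, by omega⟩),
            adj_path _ _ _ (Or.inr rfl) rfl,
            by simp only [ladderLabel, Nat.even_iff, Fin.val_mk]; split_ifs <;> first | omega | exact (‹False›).elim⟩
        · have hi1 : m / 12 + 1 < n := by omega
          have hi : m / 12 < n := by omega
          exact ⟨(⟨m / 12, hi⟩, ⟨0, by omega⟩), (⟨m / 12 + 1, hi1⟩, ⟨0, by omega⟩),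
            adj_path _ _ _ (Or.inl rfl) rfl,
            by simp only [ladderLabel, Nat.even_iff, Fin.val_mk]; split_ifs <;> first | omega | exact (‹False›).elim⟩
      · rcases h12 with h | h | h | h | h | h
        · have hi : m / 12 < n := by omega
          exact ⟨(⟨m / 12, hi⟩, ⟨1, by omega⟩), (⟨m / 12, hi⟩, ⟨2, by omega⟩),
            adj_cycle _ _ _ (Or.inl rfl),
            by simp only [ladderLabel, Nat.even_iff, Fin.val_mk]; split_ifs <;> first | omega | exact (‹False›).elim⟩
        · have hi : m / 12 < n := by omega
          exact ⟨(⟨m / 12, hi⟩, ⟨2, by omega⟩), (⟨m / 12, hi⟩, ⟨3, by omega⟩),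
            adj_cycle _ _ _ (Or.inl rfl),
            by simp only [ladderLabel, Nat.even_iff, Fin.val_mk]; split_ifs <;> first | omega | exact (‹False›).elim⟩
        · have hi : m / 12 < n := by omega
          exact ⟨(⟨m / 12, hi⟩, ⟨0, by omega⟩), (⟨m / 12, hi⟩, ⟨1, by omega⟩),
            adj_cycle _ _ _ (Or.inl rfl),
            by simp only [ladderLabel, Nat.even_iff, Fin.val_mk]; split_ifs <;> first | omega | exact (‹False›).elim⟩
        · have hi : m / 12 < n := by omega
          exact ⟨(⟨m / 12, hi⟩, ⟨3, by omega⟩), (⟨m / 12, hi⟩, ⟨0, by omega⟩),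
            adj_cycle _ _ _ (Or.inr ⟨rfl, rfl⟩),
            by simp only [ladderLabel, Nat.even_iff, Fin.val_mk]; split_ifs <;> first | omega | exact (‹False›).elim⟩
        · have hi1 : m / 12 + 1 < n := by omega
          have hi : m / 12 < n := by omega
          exact ⟨(⟨m / 12, hi⟩, ⟨2, by omega⟩), (⟨m / 12 + 1, hi1⟩, ⟨2, by omega⟩),
            adj_path _ _ _ (Or.inr rfl) rfl,
            by simp only [ladderLabel, Nat.even_iff, Fin.val_mk]; split_ifs <;> first | omega | exact (‹False›).elim⟩
        · have hi1 : m / 12 + 1 < n := by omega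
          have hi : m / 12 < n := by omega
          exact ⟨(⟨m / 12, hi⟩, ⟨0, by omega⟩), (⟨m / 12 + 1, hi1⟩, ⟨0, by omega⟩),
            adj_path _ _ _ (Or.inl rfl) rfl,
            by simp only [ladderLabel, Nat.even_iff, Fin.val_mk]; split_ifs <;> first | omega | exact (‹False›).elim⟩
end

section
/- For all k ≥ 1 and r ≥ 1, the r-crown of the cycle C_{4k} (obtained by attaching r pendant edges at each vertex of C_{4k}) admits an odd strongly harmonious labeling. -/
open SimpleGraph

/-- The r-crown of the cycle Cₙ: the cycle on u₀,…,u_{n-1} with r pendant vertices attached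
at each cycle vertex. -/
def CrownCycle (n r : ℕ) : SimpleGraph (Fin n ⊕ Fin n × Fin r) :=
  SimpleGraph.fromRel (fun a b =>
    (∃ i j : Fin n, a = Sum.inl i ∧ b = Sum.inl j ∧ (j : ℕ) = ((i : ℕ) + 1) % n) ∨
    (∃ (i : Fin n) (j : Fin r), a = Sum.inl i ∧ b = Sum.inr (i, j)))

def fl (k i : ℕ) : ℕ := if 2*k < i ∧ i % 2 = 1 then i + 2 else i

lemma fl_lt {k i : ℕ} (hk : 1 ≤ k) (hi : i < 4*k) : fl k i < 8*k := by
  unfold fl; split_ifs <;> omega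

lemma fl_inj {k i j : ℕ} (h : fl k i = fl k j) : i = j := by
  unfold fl at h; split_ifs at h <;> omega

lemma mod_succ {k i : ℕ} (hi : i < 4*k) : (i+1) % (4*k) = if i+1 = 4*k then 0 else i+1 := by
  split_ifs with h
  · rw [h, Nat.mod_self]
  · exact Nat.mod_eq_of_lt (by omega)

def S (k i : ℕ) : ℕ := fl k i + fl k ((i+1) % (4*k))

lemma S_formula {k i : ℕ} (hk : 1 ≤ k) (hi : i < 4*k) :
    S k i = if i < 2*k then 2*i+1 else if i+1 = 4*k then 4*k+1 else 2*i+3 := by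
  unfold S
  rw [mod_succ hi]
  by_cases h : i + 1 = 4*k <;> simp only [h, if_true, if_false] <;> unfold fl <;>
    split_ifs <;> omega

lemma S_odd_lt {k i : ℕ} (hk : 1 ≤ k) (hi : i < 4*k) : S k i % 2 = 1 ∧ S k i < 8*k := by
  rw [S_formula hk hi]; split_ifs <;> omega

lemma S_surj {k m : ℕ} (hk : 1 ≤ k) (hm : m % 2 = 1) (hm2 : m < 8*k) :
    ∃ i, i < 4*k ∧ S k i = m := by
  by_cases h1 : m < 4*k
  · exact ⟨m/2, by omega, by rw [S_formula hk (by omega)]; split_ifs <;> omega⟩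
  by_cases h2 : m = 4*k+1
  · exact ⟨4*k-1, by omega, by rw [S_formula hk (by omega)]; split_ifs <;> omega⟩
  · exact ⟨(m-3)/2, by omega, by rw [S_formula hk (by omega)]; split_ifs <;> omega⟩

lemma succ_mod_inj {k i j : ℕ} (hi : i < 4*k) (hj : j < 4*k)
    (h : (i+1) % (4*k) = (j+1) % (4*k)) : i = j := by
  rw [mod_succ hi, mod_succ hj] at h; split_ifs at h <;> omega

lemma succ_mod_ne {k i : ℕ} (hk : 1 ≤ k) (hi : i < 4*k) : (i+1) % (4*k) ≠ i := by
  rw [mod_succ hi]; split_ifs <;> omega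

def glab (k r : ℕ) : Fin (4*k) ⊕ Fin (4*k) × Fin r → ℕ :=
  Sum.elim (fun i => fl k (i : ℕ))
    (fun p => 8*k*((p.2 : ℕ)+1) + fl k (((p.1 : ℕ)+1) % (4*k)))


/-- The r-crown of the cycle C_{4k} admits an odd strongly harmonious labeling. -/
theorem crown_odd_harmonious (k r : ℕ) (hk : 1 ≤ k) (hr : 1 ≤ r) :
    ∃ g : Fin (4 * k) ⊕ Fin (4 * k) × Fin r → ℕ,
      IsOddHarmonious (CrownCycle (4 * k) r) (4 * k * (r + 1)) g := by
  refine ⟨glab k r, ?_, ?_, ?_⟩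
  · -- injectivity
    rintro (i | ⟨i, j⟩) (i' | ⟨i', j'⟩) h <;>
      simp only [glab, Sum.elim_inl, Sum.elim_inr] at h
    · exact congrArg Sum.inl (Fin.ext (fl_inj h))
    · exfalso
      have h1 := fl_lt hk i.isLt
      have h2 : 8*k*1 ≤ 8*k*((j':ℕ)+1) := Nat.mul_le_mul_left _ (by omega)
      omega
    · exfalso
      have h1 := fl_lt hk i'.isLt
      have h2 : 8*k*1 ≤ 8*k*((j:ℕ)+1) := Nat.mul_le_mul_left _ (by omega)
      omega
    · have hx : fl k (((i:ℕ)+1) % (4*k)) < 8*k :=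
        fl_lt hk (Nat.mod_lt _ (by omega))
      have hy : fl k (((i':ℕ)+1) % (4*k)) < 8*k :=
        fl_lt hk (Nat.mod_lt _ (by omega))
      have hxy : fl k (((i:ℕ)+1) % (4*k)) = fl k (((i':ℕ)+1) % (4*k)) := by
        have e1 : (fl k (((i:ℕ)+1) % (4*k)) + ((j:ℕ)+1) * (8*k)) % (8*k)
            = (fl k (((i':ℕ)+1) % (4*k)) + ((j':ℕ)+1) * (8*k)) % (8*k) := by
          rw [show fl k (((i:ℕ)+1) % (4*k)) + ((j:ℕ)+1) * (8*k)
              = 8*k*((j:ℕ)+1) + fl k (((i:ℕ)+1) % (4*k)) by ring,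
            show fl k (((i':ℕ)+1) % (4*k)) + ((j':ℕ)+1) * (8*k)
              = 8*k*((j':ℕ)+1) + fl k (((i':ℕ)+1) % (4*k)) by ring, h]
        rwa [Nat.add_mul_mod_self_right, Nat.add_mul_mod_self_right,
          Nat.mod_eq_of_lt hx, Nat.mod_eq_of_lt hy] at e1
      have hii : i = i' := Fin.ext (succ_mod_inj i.isLt i'.isLt (fl_inj hxy))
      have hj8 : 8*k*((j:ℕ)+1) = 8*k*((j':ℕ)+1) := by omega
      have hjj : j = j' := Fin.ext (by
        have := Nat.eq_of_mul_eq_mul_left (show 0 < 8*k by omega) hj8; omega)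
      rw [hii, hjj]
  · -- bounds
    have h4 : 2 * (4*k*(r+1)) = 8*k*(r+1) := by ring
    rintro (i | ⟨i, j⟩) <;> simp only [glab, Sum.elim_inl, Sum.elim_inr]
    · have h1 := fl_lt hk i.isLt
      have h2 : 8*k*1 ≤ 8*k*(r+1) := Nat.mul_le_mul_left _ (by omega)
      omega
    · have h1 : fl k (((i:ℕ)+1) % (4*k)) < 8*k := fl_lt hk (Nat.mod_lt _ (by omega))
      have h2 : 8*k*((j:ℕ)+2) ≤ 8*k*(r+1) := Nat.mul_le_mul_left _ (by omega)
      have h3 : 8*k*((j:ℕ)+2) = 8*k*((j:ℕ)+1) + 8*k := by ring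
      omega
  · -- edge labels
    ext m
    simp only [harmoniousEdgeLabels, oddBelow, Set.mem_setOf_eq]
    constructor
    · rintro ⟨x, y, hadj, rfl⟩
      rw [CrownCycle, SimpleGraph.fromRel_adj] at hadj
      obtain ⟨-, hrel⟩ := hadj
      have h4 : 2 * (4*k*(r+1)) = 8*k*(r+1) := by ring
      have key : ∀ a b : Fin (4*k) ⊕ Fin (4*k) × Fin r,
          ((∃ i j : Fin (4*k), a = Sum.inl i ∧ b = Sum.inl j ∧ (j:ℕ) = ((i:ℕ)+1) % (4*k)) ∨
           (∃ (i : Fin (4*k)) (j : Fin r), a = Sum.inl i ∧ b = Sum.inr (i, j))) →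
          Odd (glab k r a + glab k r b) ∧ glab k r a + glab k r b < 2 * (4*k*(r+1)) := by
        rintro a b (⟨i, j, rfl, rfl, hij⟩ | ⟨i, j, rfl, rfl⟩) <;>
          simp only [glab, Sum.elim_inl, Sum.elim_inr]
        · have hS := S_odd_lt hk i.isLt
          have hsum : fl k (i:ℕ) + fl k (j:ℕ) = S k (i:ℕ) := by rw [hij]; rfl
          have h2 : 8*k*1 ≤ 8*k*(r+1) := Nat.mul_le_mul_left _ (by omega)
          rw [hsum]
          exact ⟨by rw [Nat.odd_iff]; omega, by omega⟩
        · have hS := S_odd_lt hk i.isLt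
          have h2 : 8*k*((j:ℕ)+2) ≤ 8*k*(r+1) := Nat.mul_le_mul_left _ (by omega)
          have h3 : 8*k*((j:ℕ)+2) = 8*k*((j:ℕ)+1) + 8*k := by ring
          have h5 : (2:ℕ) ∣ 8*k*((j:ℕ)+1) := ⟨4*k*((j:ℕ)+1), by ring⟩
          have hsum : fl k (i:ℕ) + (8*k*((j:ℕ)+1) + fl k (((i:ℕ)+1) % (4*k)))
              = 8*k*((j:ℕ)+1) + S k (i:ℕ) := by unfold S; ring
          rw [hsum]
          refine ⟨by rw [Nat.odd_iff]; omega, ?_⟩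
          unfold S at hS; omega
      rcases hrel with hrel | hrel
      · exact key x y hrel
      · obtain ⟨h1, h2⟩ := key y x hrel
        exact ⟨by rwa [Nat.add_comm] at h1, by rwa [Nat.add_comm] at h2⟩
    · rintro ⟨hodd, hlt⟩
      rw [Nat.odd_iff] at hodd
      have h2q : 2 * (4*k*(r+1)) = 8*k*(r+1) := by ring
      have hpos : 0 < 8*k := by omega
      by_cases hb : m < 8*k
      · -- cycle edge
        obtain ⟨i, hi, hSi⟩ := S_surj hk hodd hb
        refine ⟨Sum.inl ⟨i, hi⟩, Sum.inl ⟨(i+1) % (4*k), Nat.mod_lt _ (by omega)⟩, ?_, ?_⟩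
        · rw [CrownCycle, SimpleGraph.fromRel_adj]
          refine ⟨?_, Or.inl (Or.inl ⟨_, _, rfl, rfl, rfl⟩)⟩
          simp only [ne_eq, Sum.inl.injEq, Fin.mk.injEq]
          exact fun hcon => succ_mod_ne hk hi hcon.symm
        · simp only [glab, Sum.elim_inl]
          exact hSi.symm
      · -- pendant edge
        have hmod : m % (8*k) % 2 = m % 2 := Nat.mod_mod_of_dvd m ⟨4*k, by ring⟩
        obtain ⟨i, hi, hSi⟩ := S_surj hk (show m % (8*k) % 2 = 1 by omega) (Nat.mod_lt m hpos)
        have hdb : m / (8*k) < r + 1 := by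
          rw [Nat.div_lt_iff_lt_mul hpos]
          have : (r+1)*(8*k) = 2*(4*k*(r+1)) := by ring
          omega
        have hb1 : 1 ≤ m / (8*k) := by
          rw [Nat.le_div_iff_mul_le hpos]
          omega
        refine ⟨Sum.inl ⟨i, hi⟩, Sum.inr (⟨i, hi⟩, ⟨m / (8*k) - 1, by omega⟩), ?_, ?_⟩
        · rw [CrownCycle, SimpleGraph.fromRel_adj]
          exact ⟨Sum.inl_ne_inr, Or.inl (Or.inr ⟨_, _, rfl, rfl⟩)⟩
        · simp only [glab, Sum.elim_inl, Sum.elim_inr]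
          have e1 : m / (8*k) - 1 + 1 = m / (8*k) := by omega
          have e2 := Nat.div_add_mod m (8*k)
          calc m = 8*k*(m/(8*k)) + m % (8*k) := e2.symm
            _ = 8*k*(m/(8*k) - 1 + 1) + S k i := by rw [e1, hSi]
            _ = fl k i + (8*k*(m/(8*k) - 1 + 1) + fl k ((i+1) % (4*k))) := by unfold S; ring
end

section
/- The 6-cycle C_6 admits an odd graceful labeling (e.g., consecutive vertex labels 0, 11, 2, 9, 4, 3) but admits no odd strongly harmonious labeling. -/
open SimpleGraph

open Finset in
/-- C₆ admits an odd graceful labeling but no odd strongly harmonious labeling. -/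
theorem c6_odd_graceful_not_odd_harmonious :
    (∃ f : Fin 6 → ℕ, IsOddGraceful (SimpleGraph.cycleGraph 6) 6 f) ∧
    ¬ ∃ g : Fin 6 → ℕ, IsOddHarmonious (SimpleGraph.cycleGraph 6) 6 g := by
  constructor
  · -- the labeling 0, 11, 2, 9, 4, 3 is odd graceful
    use ![0, 11, 2, 9, 4, 3]
    refine ⟨by decide, by decide, ?_⟩
    ext n
    simp only [gracefulEdgeLabels, oddBelow, Set.mem_setOf_eq]
    constructor
    · rintro ⟨x, y, hadj, rfl⟩
      revert hadj
      revert x y; decide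
    · rintro ⟨⟨k, rfl⟩, hlt⟩
      have hk : k < 6 := by omega
      interval_cases k
      · exact ⟨4, 5, by decide, by decide⟩
      · exact ⟨5, 0, by decide, by decide⟩
      · exact ⟨3, 4, by decide, by decide⟩
      · exact ⟨2, 3, by decide, by decide⟩
      · exact ⟨1, 2, by decide, by decide⟩
      · exact ⟨0, 1, by decide, by decide⟩
  · -- no odd strongly harmonious labeling exists
    rintro ⟨g, -, -, hset⟩
    have hodd : ∀ x y : Fin 6, (cycleGraph 6).Adj x y → Odd (g x + g y) := by
      intro x y h
      have : g x + g y ∈ harmoniousEdgeLabels (cycleGraph 6) g := ⟨x, y, h, rfl⟩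
      rw [hset] at this
      exact this.1
    set s : Fin 6 → ℕ := fun i => g i + g (i + 1) with hs
    set T : Finset ℕ := Finset.image s Finset.univ with hT
    have hmem : ∀ x y : Fin 6, (cycleGraph 6).Adj x y → g x + g y ∈ T := by
      intro x y h
      rw [cycleGraph_adj'] at h
      rcases h with h | h
      · have hx : x = y + 1 := by revert h; revert x y; decide
        subst hx
        rw [Nat.add_comm]
        exact Finset.mem_image_of_mem s (mem_univ y)
      · have hy : y = x + 1 := by revert h; revert x y; decide
        subst hy
        exact Finset.mem_image_of_mem s (mem_univ x)
    have hsub : ({1, 3, 5, 7, 9, 11} : Finset ℕ) ⊆ T := by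
      intro n hn
      have hn' : n ∈ oddBelow 6 := by
        fin_cases hn <;> exact ⟨by decide, by decide⟩
      rw [← hset] at hn'
      obtain ⟨x, y, hadj, rfl⟩ := hn'
      exact hmem x y hadj
    have hTle : T.card ≤ 6 := le_trans (card_image_le) (by simp)
    have hTeq : T = ({1, 3, 5, 7, 9, 11} : Finset ℕ) :=
      (Finset.eq_of_subset_of_card_le hsub
        (by rw [show ({1,3,5,7,9,11} : Finset ℕ).card = 6 from rfl]; exact hTle)).symm
    have hinj : Set.InjOn s (Finset.univ : Finset (Fin 6)) := by
      apply Finset.injOn_of_card_image_eq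
      rw [← hT, hTeq]
      simp
    have hsum : ∑ n ∈ T, n = ∑ i : Fin 6, s i :=
      Finset.sum_image (fun x hx y hy h => hinj hx hy h)
    rw [hTeq, Fin.sum_univ_six] at hsum
    have h36 : ∑ n ∈ ({1, 3, 5, 7, 9, 11} : Finset ℕ), n = 36 := by decide
    simp only [show s 0 = g 0 + g 1 from rfl, show s 1 = g 1 + g 2 from rfl,
      show s 2 = g 2 + g 3 from rfl, show s 3 = g 3 + g 4 from rfl,
      show s 4 = g 4 + g 5 from rfl, show s 5 = g 5 + g 0 from rfl] at hsum
    rw [h36] at hsum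
    have e01 : Odd (g 0 + g 1) := hodd 0 1 (by decide)
    have e23 : Odd (g 2 + g 3) := hodd 2 3 (by decide)
    have e45 : Odd (g 4 + g 5) := hodd 4 5 (by decide)
    obtain ⟨a, ha⟩ := e01
    obtain ⟨b, hb⟩ := e23
    obtain ⟨c, hc⟩ := e45
    omega
end
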